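/- The group G presented by generators b, c, x, y and relators xy = yx, b² = x, c³ = y is not abelian, and there is no surjective group homomorphism from G onto the free group F₂ of rank 2. -/

import Mathlib

/-!
Everything is detected by homomorphisms to `S₃`. A homomorphism out of
`G = ⟨b, c, x, y | [x,y], b² = x, c³ = y⟩` is the same as a pair `(β, γ)` with `β²` and `γ³`
commuting. The pair (transposition, 3-cycle) shows that `G` is not abelian. In `S₃` there are
only 30 such pairs, whereas a surjection `G → F₂` would pull the `6² = 36` homomorphisms
`F₂ → S₃` back to pairwise distinct homomorphisms `G → S₃`.
-/

/-- Generators `b, c, x, y`. -/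
def b7 : FreeGroup (Fin 4) := FreeGroup.of 0
def c7 : FreeGroup (Fin 4) := FreeGroup.of 1
def x7 : FreeGroup (Fin 4) := FreeGroup.of 2
def y7 : FreeGroup (Fin 4) := FreeGroup.of 3

/-- Relators `xy = yx`, `b² = x`, `c³ = y`. -/
def rels7 : Set (FreeGroup (Fin 4)) :=
  {x7 * y7 * (y7 * x7)⁻¹, b7 ^ 2 * x7⁻¹, c7 ^ 3 * y7⁻¹}

open PresentedGroup

theorem MonoidHom.card_pow_le_card_hom_of_surjective {G K α : Type*} [Group G] [Group K]
    [Finite α] [Finite (G →* K)] (f : G →* FreeGroup α) (hf : Function.Surjective f) :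
    Nat.card K ^ Nat.card α ≤ Nat.card (G →* K) :=
  calc Nat.card K ^ Nat.card α = Nat.card (FreeGroup α →* K) := by
        rw [← Nat.card_fun, Nat.card_congr FreeGroup.lift]
    _ ≤ Nat.card (G →* K) :=
        Nat.card_le_card_of_injective (·.comp f) fun _ _ ↦ (MonoidHom.cancel_right hf).mp

set_option maxRecDepth 8000 in
theorem card_commute_sq_cube_perm_three :
    Nat.card {p : Equiv.Perm (Fin 3) × Equiv.Perm (Fin 3) // Commute (p.1 ^ 2) (p.2 ^ 3)} = 30 := by
  simp only [commute_iff_eq, Nat.card_eq_fintype_card]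
  decide

namespace rels7

theorem of_two_eq : (of 2 : PresentedGroup rels7) = of 0 ^ 2 :=
  ((mk_eq_mk_of_mul_inv_mem (x := b7 ^ 2) (y := x7) (by simp [rels7])).symm.trans
    (map_pow (mk rels7) b7 2) :)

theorem of_three_eq : (of 3 : PresentedGroup rels7) = of 1 ^ 3 :=
  ((mk_eq_mk_of_mul_inv_mem (x := c7 ^ 3) (y := y7) (by simp [rels7])).symm.trans
    (map_pow (mk rels7) c7 3) :)

theorem commute_of_two_of_three : Commute (of 2 : PresentedGroup rels7) (of 3) :=
  mk_eq_mk_of_mul_inv_mem (by simp [rels7, x7, y7])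

variable {K : Type*} [Group K]

theorem commute_map_of_pow (φ : PresentedGroup rels7 →* K) :
    Commute (φ (of 0) ^ 2) (φ (of 1) ^ 3) := by
  simpa only [of_two_eq, of_three_eq, map_pow] using commute_of_two_of_three.map φ

def lift (β γ : K) (h : Commute (β ^ 2) (γ ^ 3)) : PresentedGroup rels7 →* K :=
  toGroup (f := ![β, γ, β ^ 2, γ ^ 3]) <| by
    rintro r (rfl | rfl | rfl) <;> simp [b7, c7, x7, y7, h.eq]

theorem lift_of_zero (β γ : K) (h : Commute (β ^ 2) (γ ^ 3)) : lift β γ h (of 0) = β :=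
  toGroup.of _

theorem lift_of_one (β γ : K) (h : Commute (β ^ 2) (γ ^ 3)) : lift β γ h (of 1) = γ :=
  toGroup.of _

theorem hom_ext {φ ψ : PresentedGroup rels7 →* K} (h₀ : φ (of 0) = ψ (of 0))
    (h₁ : φ (of 1) = ψ (of 1)) : φ = ψ := by
  refine PresentedGroup.ext fun i ↦ ?_
  fin_cases i
  · exact h₀
  · exact h₁
  · simp [of_two_eq, h₀]
  · simp [of_three_eq, h₁]

def homEquiv : (PresentedGroup rels7 →* K) ≃ {p : K × K // Commute (p.1 ^ 2) (p.2 ^ 3)} where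
  toFun φ := ⟨(φ (of 0), φ (of 1)), commute_map_of_pow φ⟩
  invFun p := lift p.1.1 p.1.2 p.2
  left_inv φ := hom_ext (lift_of_zero ..) (lift_of_one ..)
  right_inv p := by ext <;> simp [lift_of_zero, lift_of_one]

instance [Finite K] : Finite (PresentedGroup rels7 →* K) :=
  .of_equiv _ homEquiv.symm

end rels7

/-- The group `⟨b, c, x, y | [x,y], b² = x, c³ = y⟩` is not abelian, yet admits no
surjective homomorphism onto the free group `F₂`. -/
theorem nonmaximal_example_fails_Tits :
    (¬ ∀ g h : PresentedGroup rels7, g * h = h * g) ∧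
    ¬ ∃ f : PresentedGroup rels7 →* FreeGroup (Fin 2), Function.Surjective f := by
  constructor
  · intro hcomm
    have h : Commute (Equiv.swap (0 : Fin 3) 1 ^ 2) (finRotate 3 ^ 3) := by
      rw [commute_iff_eq]; decide
    have hS₃ := congrArg (rels7.lift _ _ h) (hcomm (of 0) (of 1))
    rw [map_mul, map_mul, rels7.lift_of_zero, rels7.lift_of_one] at hS₃
    exact absurd hS₃ (by decide)
  · rintro ⟨f, hf⟩
    have hcard := MonoidHom.card_pow_le_card_hom_of_surjective (K := Equiv.Perm (Fin 3)) f hf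
    rw [Nat.card_congr rels7.homEquiv, card_commute_sq_cube_perm_three, Nat.card_perm] at hcard
    norm_num [Nat.factorial] at hcard
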